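/- arXiv:2502.05807 — 4 statements merged into one kernel-verified Lean document; each statement's English description precedes it below -/
import Mathlib

section
/- Let u : ℝ × ℝ^D → ℝ^D be continuously differentiable with continuous second-order spatial derivatives, and let p : ℝ × ℝ^D → (0,∞) be twice continuously differentiable and satisfy the continuity equation with respect to u. Let x : ℝ → ℝ^D and v : ℝ → ℝ^D be differentiable curves with x′(t) = u(t, x(t)) and v′(t) = (D_x u)(t, x(t)) v(t), where D_x u denotes the spatial Jacobian. Define ω(t) = ⟨v(t), ∇_x log p(t, x(t))⟩. Then for all t, ω′(t) = −div_x( y ↦ (D_x u)(t, y) v(t) )(x(t)), equivalently ω′(t) = −⟨∇_x( div_x u(t,·) )(x(t)), v(t)⟩. -/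
open scoped RealInnerProductSpace

/-- Divergence of a vector field on `ℝ^D`. -/
noncomputable def vdiv {D : ℕ} (f : EuclideanSpace ℝ (Fin D) → EuclideanSpace ℝ (Fin D))
    (x : EuclideanSpace ℝ (Fin D)) : ℝ :=
  ∑ i, fderiv ℝ f x (EuclideanSpace.single i 1) i

section Aux

variable {D : ℕ} {G : Type*} [NormedAddCommGroup G] [NormedSpace ℝ G]

/-- The spatial slice of a jointly differentiable function is differentiable, with
derivative the composition with `inr`. -/
lemma hasFDerivAt_slice {F : ℝ × EuclideanSpace ℝ (Fin D) → G}
    {Φ : ℝ × EuclideanSpace ℝ (Fin D) →L[ℝ] G} {t : ℝ} {y : EuclideanSpace ℝ (Fin D)}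
    (h : HasFDerivAt F Φ (t, y)) :
    HasFDerivAt (fun z => F (t, z))
      (Φ.comp (ContinuousLinearMap.inr ℝ ℝ (EuclideanSpace ℝ (Fin D)))) y := by
  have h1 : HasFDerivAt (fun z : EuclideanSpace ℝ (Fin D) => ((t, z) : ℝ × _))
      (ContinuousLinearMap.inr ℝ ℝ (EuclideanSpace ℝ (Fin D))) y :=
    (hasFDerivAt_const t y).prodMk (hasFDerivAt_id y)
  exact h.comp y h1

/-- A continuous linear functional on Euclidean space is determined by its values on the
standard basis. -/
lemma clm_apply_eq_sum (φ : EuclideanSpace ℝ (Fin D) →L[ℝ] ℝ) (w : EuclideanSpace ℝ (Fin D)) :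
    φ w = ∑ i, w i * φ (EuclideanSpace.single i 1) := by
  have hw : w = ∑ i, w i • EuclideanSpace.single i (1 : ℝ) := by
    ext j
    rw [WithLp.ofLp_sum, Finset.sum_apply]
    simp [EuclideanSpace.single_apply]
  conv_lhs => rw [hw]
  simp [map_sum]

end Aux

/-- Time evolution of the score-alignment quantity: if `x` follows the flow of `u`,
`v` solves the sensitivity ODE `v′ = D_x u (t, x(t)) v`, and `p` solves the continuity
equation for `u`, then `ω(t) = ⟨v(t), ∇ log p(t, x(t))⟩` satisfies
`ω′(t) = −div( y ↦ D_x u(t,y) v(t) )(x(t))`. -/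
theorem score_alignment_evolution {D : ℕ}
    (u : ℝ → EuclideanSpace ℝ (Fin D) → EuclideanSpace ℝ (Fin D))
    (hu : ContDiff ℝ 2 (Function.uncurry u))
    (p : ℝ → EuclideanSpace ℝ (Fin D) → ℝ)
    (hp_pos : ∀ t x, 0 < p t x)
    (hp_smooth : ContDiff ℝ 2 (Function.uncurry p))
    (hcont : ∀ t x, deriv (fun s => p s x) t + vdiv (fun y => p t y • u t y) x = 0)
    (x v : ℝ → EuclideanSpace ℝ (Fin D))
    (hx : ∀ t, HasDerivAt x (u t (x t)) t)
    (hv : ∀ t, HasDerivAt v (fderiv ℝ (u t) (x t) (v t)) t)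
    (ω : ℝ → ℝ)
    (hω : ∀ t, ω t = ⟪v t, gradient (fun y => Real.log (p t y)) (x t)⟫) :
    ∀ t, HasDerivAt ω (-vdiv (fun y => fderiv ℝ (u t) y (v t)) (x t)) t := by
  classical
  -- the log-density as a joint function
  set L : ℝ × EuclideanSpace ℝ (Fin D) → ℝ := fun q => Real.log (Function.uncurry p q) with hLdef
  have hL : ∀ q, ContDiffAt ℝ 2 L q := fun q =>
    ContDiffAt.comp (g := Real.log) (f := Function.uncurry p) q
      (Real.contDiffAt_log.2 (ne_of_gt (hp_pos q.1 q.2))) hp_smooth.contDiffAt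
  have hLfd : ∀ q, HasFDerivAt L (fderiv ℝ L q) q := fun q =>
    ((hL q).differentiableAt (by norm_num)).hasFDerivAt
  have hDL1 : ∀ q, ContDiffAt ℝ 1 (fderiv ℝ L) q := fun q =>
    (hL q).fderiv_right (by norm_num)
  -- smoothness of the slices of `u`
  have hus : ∀ s : ℝ, ContDiff ℝ 2 (u s) := fun s =>
    hu.comp ((contDiff_const (c := s)).prodMk contDiff_id)
  have husd : ∀ (s : ℝ) (y), HasFDerivAt (u s) (fderiv ℝ (u s) y) y := fun s y =>
    (((hus s).differentiable (by norm_num)) y).hasFDerivAt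
  have hDu1 : ∀ s : ℝ, ContDiff ℝ 1 (fderiv ℝ (u s)) := fun s =>
    (hus s).fderiv_right (by norm_num)
  have hDufd : ∀ (s : ℝ) (y), HasFDerivAt (fderiv ℝ (u s)) (fderiv ℝ (fderiv ℝ (u s)) y) y :=
    fun s y => (((hDu1 s).differentiable (by norm_num)) y).hasFDerivAt
  -- joint differentiability of p
  have hPfd : ∀ q, HasFDerivAt (Function.uncurry p) (fderiv ℝ (Function.uncurry p) q) q :=
    fun q => ((hp_smooth.differentiable (by norm_num)) q).hasFDerivAt
  -- rewrite ω in terms of the joint derivative of L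
  have hωg : ω = fun s => fderiv ℝ L (s, x s) ((0 : ℝ), v s) := by
    funext s
    rw [hω s, real_inner_comm, gradient, InnerProductSpace.toDual_symm_apply]
    have hslice := hasFDerivAt_slice (hLfd (s, x s))
    have : fderiv ℝ (fun y => Real.log (p s y)) (x s)
        = (fderiv ℝ L (s, x s)).comp
            (ContinuousLinearMap.inr ℝ ℝ (EuclideanSpace ℝ (Fin D))) := hslice.fderiv
    rw [this]
    rfl
  -- the continuity equation in terms of L
  have key : ∀ (t : ℝ) (y : EuclideanSpace ℝ (Fin D)),
      fderiv ℝ L (t, y) ((1 : ℝ), (0 : EuclideanSpace ℝ (Fin D)))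
        + fderiv ℝ L (t, y) ((0 : ℝ), u t y) + vdiv (u t) y = 0 := by
    intro t y
    set π := p t y with hπ
    have hπpos : (0 : ℝ) < π := hp_pos t y
    set dP := fderiv ℝ (Function.uncurry p) (t, y) with hdP
    -- derivative of L
    have hlog : HasFDerivAt L (π⁻¹ • dP) (t, y) := (hPfd (t, y)).log (ne_of_gt hπpos)
    have hDLval : fderiv ℝ L (t, y) = π⁻¹ • dP := hlog.fderiv
    -- time derivative of p
    have hdt : deriv (fun s => p s y) t = dP ((1 : ℝ), (0 : EuclideanSpace ℝ (Fin D))) := by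
      have hcurve : HasDerivAt (fun s : ℝ => ((s, y) : ℝ × EuclideanSpace ℝ (Fin D)))
          ((1 : ℝ), (0 : EuclideanSpace ℝ (Fin D))) t :=
        (hasDerivAt_id t).prodMk (hasDerivAt_const t y)
      exact ((hPfd (t, y)).comp_hasDerivAt t hcurve).deriv
    -- spatial derivative of p
    have hpt : HasFDerivAt (p t)
        (dP.comp (ContinuousLinearMap.inr ℝ ℝ (EuclideanSpace ℝ (Fin D)))) y :=
      hasFDerivAt_slice (hPfd (t, y))
    set Dpy := dP.comp (ContinuousLinearMap.inr ℝ ℝ (EuclideanSpace ℝ (Fin D))) with hDpy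
    -- divergence of p • u
    have hdivpu : vdiv (fun z => p t z • u t z) y
        = Dpy (u t y) + π * vdiv (u t) y := by
      have hsmul : HasFDerivAt (fun z => p t z • u t z)
          (π • fderiv ℝ (u t) y + Dpy.smulRight (u t y)) y := hpt.smul (husd t y)
      have hfd := hsmul.fderiv
      unfold vdiv
      rw [hfd]
      have : ∀ i : Fin D,
          ((π • fderiv ℝ (u t) y + Dpy.smulRight (u t y)) (EuclideanSpace.single i 1)) i
            = π * (fderiv ℝ (u t) y (EuclideanSpace.single i 1)) i
              + (u t y) i * Dpy (EuclideanSpace.single i 1) := by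
        intro i
        simp [ContinuousLinearMap.add_apply, ContinuousLinearMap.smul_apply,
          ContinuousLinearMap.smulRight_apply, PiLp.add_apply, PiLp.smul_apply,
          smul_eq_mul]
        ring
      rw [Finset.sum_congr rfl fun i _ => this i, Finset.sum_add_distrib,
        clm_apply_eq_sum Dpy (u t y), Finset.mul_sum]
      ring
    have hc := hcont t y
    rw [hdt, hdivpu] at hc
    -- express the goal via dP
    have h0 : fderiv ℝ L (t, y) ((1 : ℝ), (0 : EuclideanSpace ℝ (Fin D)))
        = π⁻¹ * dP ((1 : ℝ), (0 : EuclideanSpace ℝ (Fin D))) := by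
      rw [hDLval]; simp
    have h1 : fderiv ℝ L (t, y) ((0 : ℝ), u t y) = π⁻¹ * Dpy (u t y) := by
      rw [hDLval]
      simp [hDpy, ContinuousLinearMap.comp_apply]
    rw [h0, h1]
    have hinv : π⁻¹ * π = 1 := inv_mul_cancel₀ (ne_of_gt hπpos)
    linear_combination π⁻¹ * hc - vdiv (u t) y * hinv
  -- now fix t and differentiate
  intro t
  set X := x t with hX
  set w := v t with hw
  set q : ℝ × EuclideanSpace ℝ (Fin D) := (t, X) with hq
  set DuX := fderiv ℝ (u t) X with hDuX
  set D2L := fderiv ℝ (fderiv ℝ L) q with hD2L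
  set D2u := fderiv ℝ (fderiv ℝ (u t)) X with hD2u
  -- derivative of the curve s ↦ (s, x s)
  have hγ : HasDerivAt (fun s : ℝ => ((s, x s) : ℝ × EuclideanSpace ℝ (Fin D)))
      ((1 : ℝ), u t X) t := (hasDerivAt_id t).prodMk (hx t)
  have hDLq : HasFDerivAt (fderiv ℝ L) D2L q :=
    ((hDL1 q).differentiableAt (by norm_num)).hasFDerivAt
  have hc : HasDerivAt (fun s => fderiv ℝ L (s, x s)) (D2L ((1 : ℝ), u t X)) t :=
    hDLq.comp_hasDerivAt t hγ
  have hf : HasDerivAt (fun s => (((0 : ℝ), v s) : ℝ × EuclideanSpace ℝ (Fin D)))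
      (((0 : ℝ), DuX w) : ℝ × EuclideanSpace ℝ (Fin D)) t :=
    (hasDerivAt_const t (0 : ℝ)).prodMk (hv t)
  have hg : HasDerivAt (fun s => fderiv ℝ L (s, x s) ((0 : ℝ), v s))
      (D2L ((1 : ℝ), u t X) ((0 : ℝ), w) + fderiv ℝ L q (((0 : ℝ), DuX w))) t := hc.clm_apply hf
  -- the slice of fderiv L
  have hcslice : HasFDerivAt (fun y => fderiv ℝ L (t, y))
      (D2L.comp (ContinuousLinearMap.inr ℝ ℝ (EuclideanSpace ℝ (Fin D)))) X :=
    hasFDerivAt_slice hDLq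
  -- term A : y ↦ fderiv L (t,y) (1,0)
  have hA : HasFDerivAt (fun y => fderiv ℝ L (t, y) ((1 : ℝ), (0 : EuclideanSpace ℝ (Fin D))))
      (((fderiv ℝ L q).comp (0 : EuclideanSpace ℝ (Fin D) →L[ℝ] ℝ × EuclideanSpace ℝ (Fin D)))
        + (D2L.comp (ContinuousLinearMap.inr ℝ ℝ (EuclideanSpace ℝ (Fin D)))).flip
            ((1 : ℝ), (0 : EuclideanSpace ℝ (Fin D)))) X :=
    hcslice.clm_apply (hasFDerivAt_const _ X)
  -- term B : y ↦ fderiv L (t,y) (0, u t y)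
  have hfB : HasFDerivAt (fun y => (((0 : ℝ), u t y) : ℝ × EuclideanSpace ℝ (Fin D)))
      ((0 : EuclideanSpace ℝ (Fin D) →L[ℝ] ℝ).prod DuX) X :=
    (hasFDerivAt_const (0 : ℝ) X).prodMk (husd t X)
  have hB : HasFDerivAt (fun y => fderiv ℝ L (t, y) ((0 : ℝ), u t y))
      ((fderiv ℝ L q).comp ((0 : EuclideanSpace ℝ (Fin D) →L[ℝ] ℝ).prod DuX)
        + (D2L.comp (ContinuousLinearMap.inr ℝ ℝ (EuclideanSpace ℝ (Fin D)))).flip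
            ((0 : ℝ), u t X)) X :=
    hcslice.clm_apply hfB
  -- term C : divergence of u t
  have hCi : ∀ i : Fin D, HasFDerivAt
      (fun y => fderiv ℝ (u t) y (EuclideanSpace.single i 1) i)
      ((EuclideanSpace.proj i).comp
        (DuX.comp (0 : EuclideanSpace ℝ (Fin D) →L[ℝ] EuclideanSpace ℝ (Fin D))
          + D2u.flip (EuclideanSpace.single i 1))) X := by
    intro i
    exact (EuclideanSpace.proj i).hasFDerivAt.comp X
      ((hDufd t X).clm_apply (hasFDerivAt_const _ X))
  have hC : HasFDerivAt (vdiv (u t))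
      (∑ i : Fin D, (EuclideanSpace.proj i).comp
        (DuX.comp (0 : EuclideanSpace ℝ (Fin D) →L[ℝ] EuclideanSpace ℝ (Fin D))
          + D2u.flip (EuclideanSpace.single i 1))) X := by
    have := HasFDerivAt.sum (fun i (_ : i ∈ Finset.univ) => hCi i)
    have hfun : vdiv (u t)
        = ∑ i : Fin D, fun y => fderiv ℝ (u t) y (EuclideanSpace.single i 1) i := by
      funext y
      simp [vdiv, Finset.sum_apply]
    rw [hfun]
    exact this
  -- the sum A + B + C is identically zero, hence its derivative vanishes
  have hsum := (hA.add hB).add hC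
  have hzero : (fun y => fderiv ℝ L (t, y) ((1 : ℝ), (0 : EuclideanSpace ℝ (Fin D)))
      + fderiv ℝ L (t, y) ((0 : ℝ), u t y) + vdiv (u t) y)
      = fun _ => (0 : ℝ) := funext fun y => key t y
  change HasFDerivAt (fun y => fderiv ℝ L (t, y) ((1 : ℝ), (0 : EuclideanSpace ℝ (Fin D)))
      + fderiv ℝ L (t, y) ((0 : ℝ), u t y) + vdiv (u t) y) _ X at hsum
  rw [hzero] at hsum
  have hSzero := hsum.unique (hasFDerivAt_const (0 : ℝ) X)
  have hEw := congrArg (fun Φ => Φ w) hSzero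
  simp only [ContinuousLinearMap.add_apply, ContinuousLinearMap.comp_apply,
    ContinuousLinearMap.flip_apply, ContinuousLinearMap.zero_apply,
    ContinuousLinearMap.inr_apply, ContinuousLinearMap.prod_apply,
    ContinuousLinearMap.coe_sum', Finset.sum_apply, map_zero, zero_add,
    PiLp.proj_apply] at hEw
  -- symmetry of the second derivative of L
  have hLsymm : D2L ((1 : ℝ), u t X) ((0 : ℝ), w) = D2L ((0 : ℝ), w) ((1 : ℝ), u t X) :=
    ((hL q).isSymmSndFDerivAt (by norm_num)) _ _
  -- symmetry of the second derivative of u t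
  have husymm : ∀ i : Fin D,
      D2u (EuclideanSpace.single i 1) w = D2u w (EuclideanSpace.single i 1) :=
    fun i => ((hus t).contDiffAt.isSymmSndFDerivAt (by norm_num)) _ _
  -- compute the divergence appearing in the statement
  have hΨ : fderiv ℝ (fun y => fderiv ℝ (u t) y w) X
      = DuX.comp (0 : EuclideanSpace ℝ (Fin D) →L[ℝ] EuclideanSpace ℝ (Fin D))
        + D2u.flip w :=
    ((hDufd t X).clm_apply (hasFDerivAt_const w X)).fderiv
  have hRHS : vdiv (fun y => fderiv ℝ (u t) y w) X
      = ∑ i : Fin D, (D2u w (EuclideanSpace.single i 1)) i := by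
    unfold vdiv
    rw [hΨ]
    refine Finset.sum_congr rfl fun i _ => ?_
    rw [← husymm i]
    simp [ContinuousLinearMap.add_apply, ContinuousLinearMap.comp_apply,
      ContinuousLinearMap.flip_apply]
  -- assemble
  have hval : -vdiv (fun y => fderiv ℝ (u t) y w) X
      = D2L ((1 : ℝ), u t X) ((0 : ℝ), w) + fderiv ℝ L q (((0 : ℝ), DuX w)) := by
    rw [hRHS, hLsymm]
    have hsplit : (((1 : ℝ), u t X) : ℝ × EuclideanSpace ℝ (Fin D))
        = ((1 : ℝ), (0 : EuclideanSpace ℝ (Fin D))) + ((0 : ℝ), u t X) := by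
      simp [Prod.ext_iff]
    rw [hsplit, map_add]
    linarith [hEw]
  rw [hωg, hval]
  exact hg
end

section
/- Let u : ℝ × ℝ^D → ℝ^D be continuously differentiable, let p : ℝ × ℝ^D → (0,∞) be continuously differentiable and satisfy the continuity equation with respect to u, and let b : ℝ × ℝ^D → ℝ be continuous. Define the density-guided vector field ũ(t,x) = u(t,x) + ((div_x u(t,x) + b(t,x)) / ‖∇_x log p(t,x)‖²) ∇_x log p(t,x) wherever ∇_x log p(t,x) ≠ 0. If x : ℝ → ℝ^D is a differentiable curve with x′(t) = ũ(t, x(t)) and ∇_x log p(t, x(t)) ≠ 0 for all t, then (d/dt) log p(t, x(t)) = b(t, x(t)) for all t; i.e., the log-density of the trajectory evolves exactly as prescribed by b. -/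
open scoped RealInnerProductSpace

/-- Density guidance: if `p` solves the continuity equation for `u` and the trajectory `x`
follows the density-guided field
`ũ(t,y) = u(t,y) + ((div u(t,y) + b(t,y))/‖∇ log p(t,y)‖²) ∇ log p(t,y)`,
with nonvanishing score along the trajectory, then `(d/dt) log p(t, x(t)) = b(t, x(t))`. -/
theorem density_guidance_exact_log_density {D : ℕ}
    (u : ℝ → EuclideanSpace ℝ (Fin D) → EuclideanSpace ℝ (Fin D))
    (hu : ContDiff ℝ 1 (Function.uncurry u))
    (p : ℝ → EuclideanSpace ℝ (Fin D) → ℝ)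
    (hp_pos : ∀ t x, 0 < p t x)
    (hp_smooth : ContDiff ℝ 1 (Function.uncurry p))
    (hcont : ∀ t x, deriv (fun s => p s x) t + vdiv (fun y => p t y • u t y) x = 0)
    (b : ℝ → EuclideanSpace ℝ (Fin D) → ℝ)
    (hb : Continuous (Function.uncurry b))
    (x : ℝ → EuclideanSpace ℝ (Fin D))
    (hscore : ∀ t, gradient (fun y => Real.log (p t y)) (x t) ≠ 0)
    (hx : ∀ t, HasDerivAt x
      (u t (x t) +
        ((vdiv (u t) (x t) + b t (x t)) /
            ‖gradient (fun y => Real.log (p t y)) (x t)‖ ^ 2) •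
          gradient (fun y => Real.log (p t y)) (x t)) t) :
    ∀ t, HasDerivAt (fun s => Real.log (p s (x s))) (b t (x t)) t := by
  intro t
  classical
  have hP : Differentiable ℝ (Function.uncurry p) := hp_smooth.differentiable one_ne_zero
  have hU : Differentiable ℝ (Function.uncurry u) := hu.differentiable one_ne_zero
  set X : EuclideanSpace ℝ (Fin D) := x t with hXdef
  set pt : ℝ := p t X with hptdef
  have hpt0 : 0 < pt := hp_pos t X
  set Dp : ℝ × EuclideanSpace ℝ (Fin D) →L[ℝ] ℝ :=
    fderiv ℝ (Function.uncurry p) (t, X) with hDpdef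
  -- spatial partial derivative of p
  have hincl : HasFDerivAt
      (fun y : EuclideanSpace ℝ (Fin D) => ((t, y) : ℝ × EuclideanSpace ℝ (Fin D)))
      (((0 : EuclideanSpace ℝ (Fin D) →L[ℝ] ℝ)).prod
        (ContinuousLinearMap.id ℝ (EuclideanSpace ℝ (Fin D)))) X :=
    HasFDerivAt.prodMk (hasFDerivAt_const t X) (hasFDerivAt_id X)
  set F : EuclideanSpace ℝ (Fin D) →L[ℝ] ℝ :=
    Dp.comp (((0 : EuclideanSpace ℝ (Fin D) →L[ℝ] ℝ)).prod
      (ContinuousLinearMap.id ℝ (EuclideanSpace ℝ (Fin D)))) with hFdef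
  have hsp : HasFDerivAt (fun y => p t y) F X := ((hP (t, X)).hasFDerivAt).comp X hincl
  have hFapp : ∀ w : EuclideanSpace ℝ (Fin D), F w = Dp (0, w) := fun w => rfl
  -- spatial partial derivative of u
  have hudiff : DifferentiableAt ℝ (u t) X :=
    (hU (t, X)).comp X (DifferentiableAt.prodMk (differentiableAt_const t) differentiableAt_id)
  set Fu : EuclideanSpace ℝ (Fin D) →L[ℝ] EuclideanSpace ℝ (Fin D) := fderiv ℝ (u t) X with hFudef
  -- time partial derivative of p
  have htime : HasDerivAt (fun s => p s X) (Dp (1, 0)) t := by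
    have hcurve : HasDerivAt
        (fun s : ℝ => ((s, X) : ℝ × EuclideanSpace ℝ (Fin D)))
        ((1 : ℝ), (0 : EuclideanSpace ℝ (Fin D))) t :=
      HasDerivAt.prodMk (hasDerivAt_id t) (hasDerivAt_const t X)
    exact ((hP (t, X)).hasFDerivAt).comp_hasDerivAt t hcurve
  -- gradient of log p in space
  set gl : EuclideanSpace ℝ (Fin D) := gradient (fun y => Real.log (p t y)) X with hgldef
  have hlog : HasFDerivAt (fun y => Real.log (p t y)) (pt⁻¹ • F) X :=
    (Real.hasDerivAt_log hpt0.ne').comp_hasFDerivAt X hsp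
  have hglinner : ∀ w : EuclideanSpace ℝ (Fin D), ⟪gl, w⟫ = pt⁻¹ * F w := by
    intro w
    rw [hgldef]
    unfold gradient
    rw [hlog.fderiv, InnerProductSpace.toDual_symm_apply]
    simp
  -- decomposition of vectors
  have hdecomp : ∀ w : EuclideanSpace ℝ (Fin D),
      ∑ i, w i • EuclideanSpace.single i (1:ℝ) = w := by
    intro w
    have h0 := (EuclideanSpace.basisFun (Fin D) ℝ).sum_repr w
    simpa [EuclideanSpace.basisFun_apply, EuclideanSpace.basisFun_repr] using h0
  have hFsum : ∀ w : EuclideanSpace ℝ (Fin D),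
      ∑ i, F (EuclideanSpace.single i 1) * w i = F w := by
    intro w
    conv_rhs => rw [← hdecomp w]
    rw [map_sum]
    exact Finset.sum_congr rfl fun i _ => by rw [map_smul]; simp [mul_comm]
  -- divergence product rule
  set U : EuclideanSpace ℝ (Fin D) := u t X with hUdef
  have hsmul : HasFDerivAt (fun y => p t y • u t y)
      (pt • Fu + F.smulRight U) X := hsp.smul hudiff.hasFDerivAt
  have hvdiv : vdiv (fun y => p t y • u t y) X = F U + pt * vdiv (u t) X := by
    unfold vdiv
    rw [hsmul.fderiv]
    have key : ∀ i, (pt • Fu + F.smulRight U) (EuclideanSpace.single i 1) i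
        = pt * (Fu (EuclideanSpace.single i 1) i) + F (EuclideanSpace.single i 1) * U i := by
      intro i
      simp [ContinuousLinearMap.smulRight_apply, mul_comm]
    rw [Finset.sum_congr rfl fun i _ => key i, Finset.sum_add_distrib,
      ← Finset.mul_sum, hFsum U]
    ring
  -- continuity equation at (t, X)
  have hce : Dp (1, 0) = -(F U + pt * vdiv (u t) X) := by
    have h0 := hcont t X
    rw [htime.deriv] at h0
    rw [← hvdiv]
    linarith
  -- the trajectory derivative
  set c : ℝ := (vdiv (u t) X + b t X) / ‖gl‖ ^ 2 with hcdef
  have hxv : HasDerivAt x (U + c • gl) t := hx t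
  have hcurve : HasDerivAt (fun s => ((s, x s) : ℝ × EuclideanSpace ℝ (Fin D)))
      ((1 : ℝ), U + c • gl) t :=
    HasDerivAt.prodMk (hasDerivAt_id t) hxv
  have h1 : HasDerivAt (fun s => p s (x s)) (Dp (1, U + c • gl)) t :=
    by have h := ((hP (t, X)).hasFDerivAt).comp_hasDerivAt t hcurve; exact h
  have h2 : HasDerivAt (fun s => Real.log (p s (x s))) (pt⁻¹ * Dp (1, U + c • gl)) t := by
    have h3 := (Real.hasDerivAt_log hpt0.ne').comp t h1
    exact h3
  -- compute the derivative value
  have hgl0 : ‖gl‖ ^ 2 ≠ 0 := by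
    simpa using (hscore t)
  have hFgl : F gl = pt * ‖gl‖ ^ 2 := by
    have h := hglinner gl
    rw [real_inner_self_eq_norm_sq] at h
    field_simp at h ⊢
    linarith
  have hsplit : Dp (1, U + c • gl) = Dp (1, 0) + F U + c * F gl := by
    have heq : ((1 : ℝ), U + c • gl)
        = ((1 : ℝ), (0 : EuclideanSpace ℝ (Fin D))) + ((0 : ℝ), U) + ((0 : ℝ), c • gl) := by
      simp
    rw [heq, map_add, map_add, ← hFapp U, ← hFapp (c • gl), map_smul]
    simp [add_assoc]
  have hval : pt⁻¹ * Dp (1, U + c • gl) = b t X := by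
    rw [hsplit, hce, hFgl, hcdef]
    have hgln : ‖gl‖ ≠ 0 := norm_ne_zero_iff.mpr (hscore t)
    field_simp
    ring
  rw [← hval]
  exact h2
end

section
/- Let K ≥ 2, let π_1, …, π_K > 0 with ∑_{j=1}^K π_j = 1, fix k ∈ {1, …, K}, and let b_j ∈ ℝ for each j ≠ k. Define R = (∑_{j≠k} π_j exp(−b_j/2) b_j) / (π_k + ∑_{m≠k} π_m exp(−b_m/2)). Then |R| ≤ 1/π_k + max(−min_{j≠k} b_j, 0). -/
lemma aux_exp_abs (x M : ℝ) (hM : 0 ≤ M) (hx : -x ≤ M) :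
    Real.exp (-x / 2) * |x| ≤ 1 + Real.exp (-x / 2) * M := by
  rcases le_or_gt 0 x with h | h
  · rw [abs_of_nonneg h]
    have h1 : Real.exp (-x / 2) * x ≤ 1 := by
      have h2 : x / 4 + 1 ≤ Real.exp (x / 4) := Real.add_one_le_exp (x / 4)
      have h3 : Real.exp (x / 4) * Real.exp (x / 4) = Real.exp (x / 2) := by
        rw [← Real.exp_add]; ring_nf
      have h4 : x ≤ Real.exp (x / 2) := by
        nlinarith [sq_nonneg (x - 4), Real.exp_pos (x / 4)]
      have h5 : Real.exp (-x / 2) * Real.exp (x / 2) = 1 := by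
        rw [← Real.exp_add]; ring_nf; exact Real.exp_zero
      nlinarith [Real.exp_pos (-x / 2)]
    nlinarith [mul_nonneg (Real.exp_pos (-x/2)).le hM]
  · rw [abs_of_neg h]
    have := mul_le_mul_of_nonneg_left hx (Real.exp_pos (-x / 2)).le
    linarith

/-- Deterministic bound on the Gaussian-mixture remainder term:
`|R| ≤ 1/π_k + max(−min_{j≠k} b_j, 0)` where
`R = (∑_{j≠k} π_j exp(−b_j/2) b_j) / (π_k + ∑_{m≠k} π_m exp(−b_m/2))`. -/
theorem mixture_remainder_bound {K : ℕ} (hK : 2 ≤ K)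
    (π' : Fin K → ℝ) (hπ_pos : ∀ j, 0 < π' j) (hπ_sum : ∑ j, π' j = 1)
    (k : Fin K) (b : Fin K → ℝ)
    (R : ℝ)
    (hR : R = (∑ j ∈ Finset.univ.erase k, π' j * Real.exp (-b j / 2) * b j) /
      (π' k + ∑ m ∈ Finset.univ.erase k, π' m * Real.exp (-b m / 2))) :
    |R| ≤ 1 / π' k +
      max (-(Finset.univ.erase k).inf' (by
        refine Finset.card_pos.mp ?_
        rw [Finset.card_erase_of_mem (Finset.mem_univ k), Finset.card_univ, Fintype.card_fin]
        omega) b) 0 := by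
  have hne : (Finset.univ.erase k).Nonempty := by
    refine Finset.card_pos.mp ?_
    rw [Finset.card_erase_of_mem (Finset.mem_univ k), Finset.card_univ, Fintype.card_fin]
    omega
  set S := Finset.univ.erase k with hS
  set M : ℝ := max (-(S.inf' hne b)) 0 with hM
  have hM0 : 0 ≤ M := le_max_right _ _
  have hbM : ∀ j ∈ S, -b j ≤ M := by
    intro j hj
    have := Finset.inf'_le b hj
    calc -b j ≤ -(S.inf' hne b) := by linarith
    _ ≤ M := le_max_left _ _
  set D : ℝ := π' k + ∑ m ∈ S, π' m * Real.exp (-b m / 2) with hD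
  have hsum_nonneg : 0 ≤ ∑ m ∈ S, π' m * Real.exp (-b m / 2) :=
    Finset.sum_nonneg fun m _ => mul_nonneg (hπ_pos m).le (Real.exp_pos _).le
  have hDpos : 0 < D := by
    have := hπ_pos k; simp only [hD]; linarith
  have hN : |∑ j ∈ S, π' j * Real.exp (-b j / 2) * b j| ≤ 1 + D * M := by
    calc |∑ j ∈ S, π' j * Real.exp (-b j / 2) * b j|
        ≤ ∑ j ∈ S, |π' j * Real.exp (-b j / 2) * b j| := Finset.abs_sum_le_sum_abs _ _
      _ ≤ ∑ j ∈ S, π' j * (1 + Real.exp (-b j / 2) * M) := by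
          refine Finset.sum_le_sum fun j hj => ?_
          rw [abs_mul, abs_mul, abs_of_pos (hπ_pos j), abs_of_pos (Real.exp_pos _),
            mul_assoc]
          exact mul_le_mul_of_nonneg_left (aux_exp_abs _ _ hM0 (hbM j hj)) (hπ_pos j).le
      _ = (∑ j ∈ S, π' j) + (∑ j ∈ S, π' j * Real.exp (-b j / 2)) * M := by
          rw [Finset.sum_mul, ← Finset.sum_add_distrib]
          exact Finset.sum_congr rfl fun j _ => by ring
      _ ≤ 1 + D * M := by
          have h1 : ∑ j ∈ S, π' j ≤ 1 := by
            rw [← hπ_sum]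
            exact Finset.sum_le_sum_of_subset_of_nonneg (Finset.subset_univ S)
              (fun j _ _ => (hπ_pos j).le)
          have h2 : (∑ j ∈ S, π' j * Real.exp (-b j / 2)) * M ≤ D * M := by
            apply mul_le_mul_of_nonneg_right _ hM0
            have := hπ_pos k; simp only [hD]; linarith
          linarith
  rw [hR, abs_div, abs_of_pos hDpos]
  rw [div_le_iff₀ hDpos]
  have hDk : π' k ≤ D := by simp only [hD]; linarith
  have hk := hπ_pos k
  have h3 : 1 ≤ D / π' k := (one_le_div hk).mpr hDk
  calc |∑ j ∈ S, π' j * Real.exp (-b j / 2) * b j| ≤ 1 + D * M := hN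
    _ ≤ D / π' k + M * D := by nlinarith
    _ = (1 / π' k + M) * D := by field_simp
end

section
/- Let D ≥ 1 and K ≥ 2, let π_1, …, π_K > 0 with ∑_{j=1}^K π_j = 1, fix k ∈ {1, …, K}, and let Δ_j ∈ ℝ^D with Δ_j ≠ 0 for each j ≠ k. Let ε be a standard Gaussian random vector in ℝ^D. Define b_j = 2⟨ε, Δ_j⟩ + ‖Δ_j‖² for j ≠ k and R = (∑_{j≠k} π_j exp(−b_j/2) b_j) / (π_k + ∑_{m≠k} π_m exp(−b_m/2)). Then for every δ > 0 such that a := δ√(2D) − 1/π_k > 0, one has P(|R| > δ√(2D)) ≤ (K − 1) exp(−a/2) = (K − 1) exp(−½(δ√(2D) − 1/π_k)). In particular, for fixed δ, π_k and K, the bound tends to 0 as D → ∞, so R/√(2D) → 0 in probability. -/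
open MeasureTheory ProbabilityTheory

open scoped ENNReal NNReal
open Real

lemma lintegral_pi_prod_aux {n : ℕ} (μ : Measure ℝ) [SigmaFinite μ]
    (f : Fin n → ℝ → ℝ≥0∞) (hf : ∀ i, Measurable (f i)) :
    ∫⁻ x : Fin n → ℝ, ∏ i, f i (x i) ∂(Measure.pi fun _ => μ)
      = ∏ i, ∫⁻ x, f i x ∂μ := by
  induction n with
  | zero => simp
  | succ n ih =>
    have hmp := (measurePreserving_piFinSuccAbove (fun _ : Fin (n + 1) => μ) 0).symm
    rw [← hmp.lintegral_comp_emb (MeasurableEquiv.measurableEmbedding _)]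
    simp_rw [MeasurableEquiv.piFinSuccAbove_symm_apply, Fin.insertNthEquiv,
      Fin.prod_univ_succ, Fin.insertNth_zero]
    simp only [Fin.zero_succAbove, cast_eq, Function.comp_def, Equiv.coe_fn_mk,
      Fin.cons_zero, Fin.cons_succ]
    rw [lintegral_prod_mul (f := f 0) (g := fun y : Fin n → ℝ => ∏ x, f x.succ (y x))
      (hf 0).aemeasurable
      (Finset.measurable_prod Finset.univ fun j _ =>
        (hf j.succ).comp (measurable_pi_apply j)).aemeasurable]
    rw [ih (fun i => f i.succ) (fun i => hf i.succ)]

lemma lintegral_exp_mul_gaussian (c : ℝ) :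
    ∫⁻ x, ENNReal.ofReal (Real.exp (c * x)) ∂(gaussianReal 0 1)
      = ENNReal.ofReal (Real.exp (c ^ 2 / 2)) := by
  rw [gaussianReal_of_var_ne_zero 0 one_ne_zero,
    lintegral_withDensity_eq_lintegral_mul _ (measurable_gaussianPDF 0 1)
      ((measurable_const_mul c).exp.ennreal_ofReal)]
  have key : ∀ x : ℝ, (gaussianPDF 0 1 * fun x => ENNReal.ofReal (rexp (c * x))) x
      = ENNReal.ofReal (rexp (c ^ 2 / 2)) * gaussianPDF c 1 x := by
    intro x
    simp only [Pi.mul_apply, gaussianPDF,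
      ← ENNReal.ofReal_mul (gaussianPDFReal_nonneg _ _ _),
      ← ENNReal.ofReal_mul (Real.exp_pos _).le]
    congr 1
    simp only [gaussianPDFReal, NNReal.coe_one, mul_one, sub_zero]
    rw [mul_assoc, ← Real.exp_add, mul_comm (rexp (c ^ 2 / 2)), mul_assoc, ← Real.exp_add]
    congr 1
    ring_nf
  simp_rw [key]
  rw [lintegral_const_mul _ (measurable_gaussianPDF c 1),
    lintegral_gaussianPDF_eq_one c one_ne_zero, mul_one]

lemma lintegral_exp_neg_b {D : ℕ} (Δ : Fin D → ℝ) :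
    ∫⁻ ε : Fin D → ℝ,
        ENNReal.ofReal (Real.exp (-(2 * (∑ i, ε i * Δ i) + ∑ i, Δ i ^ 2) / 2))
      ∂(Measure.pi fun _ : Fin D => gaussianReal 0 1) = 1 := by
  have hsum : ∀ ε : Fin D → ℝ, ∑ i, -Δ i * ε i = -(∑ i, ε i * Δ i) := by
    intro ε
    rw [← Finset.sum_neg_distrib]
    exact Finset.sum_congr rfl fun i _ => by ring
  have key : ∀ ε : Fin D → ℝ,
      ENNReal.ofReal (Real.exp (-(2 * (∑ i, ε i * Δ i) + ∑ i, Δ i ^ 2) / 2))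
        = ENNReal.ofReal (Real.exp (-(∑ i, Δ i ^ 2) / 2))
          * ∏ i, ENNReal.ofReal (Real.exp ((-Δ i) * ε i)) := by
    intro ε
    rw [← ENNReal.ofReal_prod_of_nonneg (fun i _ => (Real.exp_pos _).le),
      ← Real.exp_sum, ← ENNReal.ofReal_mul (Real.exp_pos _).le, ← Real.exp_add]
    congr 1
    rw [Real.exp_eq_exp, hsum ε]
    ring
  simp_rw [key]
  have hmeas : Measurable fun ε : Fin D → ℝ =>
      ∏ i, ENNReal.ofReal (Real.exp (-Δ i * ε i)) := by
    apply Finset.measurable_prod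
    intro i _
    exact ((measurable_pi_apply i : Measurable fun ε : Fin D → ℝ => ε i).const_mul (-Δ i)).exp.ennreal_ofReal
  rw [lintegral_const_mul _ hmeas,
    lintegral_pi_prod_aux _ (fun i x => ENNReal.ofReal (Real.exp (-Δ i * x)))
      (fun i => (measurable_id.const_mul (-Δ i)).exp.ennreal_ofReal)]
  simp_rw [lintegral_exp_mul_gaussian]
  rw [← ENNReal.ofReal_prod_of_nonneg (fun i _ => (Real.exp_pos _).le), ← Real.exp_sum,
    ← ENNReal.ofReal_mul (Real.exp_pos _).le, ← Real.exp_add]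
  have h2 : ∑ i : Fin D, (-Δ i) ^ 2 / 2 = (∑ i : Fin D, Δ i ^ 2) / 2 := by
    rw [← Finset.sum_div]
    congr 1
    exact Finset.sum_congr rfl fun i _ => by ring
  rw [h2, neg_div, neg_add_cancel, Real.exp_zero, ENNReal.ofReal_one]

lemma exp_abs_bound {a x : ℝ} (ha : 0 < a) (hx : -a < x) :
    Real.exp (-x / 2) * |x| ≤ a * Real.exp (-x / 2) + 1 := by
  rcases le_or_gt x 0 with h | h
  · rw [abs_of_nonpos h]
    have hle : -x ≤ a := by linarith
    nlinarith [Real.exp_pos (-x / 2)]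
  · rw [abs_of_pos h]
    have h1 : x ≤ Real.exp (x / 2) := by
      have e := Real.add_one_le_exp (x / 4)
      have e2 : Real.exp (x / 2) = Real.exp (x / 4) * Real.exp (x / 4) := by
        rw [← Real.exp_add]; ring_nf
      nlinarith [sq_nonneg (x / 4 - 1)]
    have hp := Real.exp_pos (x / 2)
    have h3 : Real.exp (-x / 2) * x ≤ 1 := by
      have h4 := mul_le_mul_of_nonneg_left h1 (inv_pos.mpr hp).le
      rw [inv_mul_cancel₀ hp.ne'] at h4
      rw [neg_div, Real.exp_neg]
      exact h4
    nlinarith [Real.exp_pos (-x / 2)]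

/-- Probability bound on the Gaussian-mixture remainder term: with `ε` a standard Gaussian
vector in `ℝ^D`, `b_j = 2⟨ε, Δ_j⟩ + ‖Δ_j‖²` and
`R = (∑_{j≠k} π_j exp(−b_j/2) b_j)/(π_k + ∑_{m≠k} π_m exp(−b_m/2))`, for every `δ > 0` with
`a := δ√(2D) − 1/π_k > 0` one has `P(|R| > δ√(2D)) ≤ (K−1) exp(−a/2)`. -/
theorem mixture_remainder_probability_bound {D K : ℕ} (hD : 1 ≤ D) (hK : 2 ≤ K)
    (π' : Fin K → ℝ) (hπ_pos : ∀ j, 0 < π' j) (hπ_sum : ∑ j, π' j = 1)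
    (k : Fin K) (Δ : Fin K → Fin D → ℝ) (hΔ : ∀ j, j ≠ k → Δ j ≠ 0)
    (b : Fin K → (Fin D → ℝ) → ℝ)
    (hb : ∀ j ε, b j ε = 2 * (∑ i, ε i * Δ j i) + ∑ i, Δ j i ^ 2)
    (R : (Fin D → ℝ) → ℝ)
    (hR : ∀ ε, R ε = (∑ j ∈ Finset.univ.erase k, π' j * Real.exp (-b j ε / 2) * b j ε) /
      (π' k + ∑ m ∈ Finset.univ.erase k, π' m * Real.exp (-b m ε / 2)))
    (δ : ℝ) (hδ : 0 < δ)
    (ha : 0 < δ * Real.sqrt (2 * D) - 1 / π' k) :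
    (Measure.pi fun _ : Fin D => gaussianReal 0 1)
        {ε | δ * Real.sqrt (2 * D) < |R ε|}
      ≤ ENNReal.ofReal
          ((K - 1 : ℝ) * Real.exp (-(δ * Real.sqrt (2 * D) - 1 / π' k) / 2)) := by
  classical
  set t : ℝ := δ * Real.sqrt (2 * D) with ht_def
  set a : ℝ := t - 1 / π' k with ha_def
  clear_value t a
  have hπk := hπ_pos k
  have hπk_inv : 0 < 1 / π' k := by positivity
  have ht_pos : 0 < t := by linarith
  have hbm : ∀ j, Measurable (b j) := by
    intro j
    have hfe : b j = fun ε => 2 * (∑ i, ε i * Δ j i) + ∑ i, Δ j i ^ 2 := funext (hb j)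
    rw [hfe]
    exact ((Finset.measurable_sum Finset.univ fun i _ =>
      (measurable_pi_apply i : Measurable fun ε : Fin D → ℝ => ε i).mul_const (Δ j i)).const_mul 2).add_const _
  have hsub : {ε : Fin D → ℝ | t < |R ε|} ⊆
      ⋃ j ∈ Finset.univ.erase k, {ε : Fin D → ℝ | b j ε ≤ -a} := by
    intro ε hε
    simp only [Set.mem_setOf_eq] at hε
    by_contra hc
    simp only [Set.mem_iUnion, Set.mem_setOf_eq, not_exists, not_le] at hc
    set S : ℝ := ∑ m ∈ Finset.univ.erase k, π' m * Real.exp (-b m ε / 2) with hS_def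
    have hS_nonneg : 0 ≤ S :=
      Finset.sum_nonneg fun m _ => mul_nonneg (hπ_pos m).le (Real.exp_pos _).le
    have hden : 0 < π' k + S := by linarith
    have hsum_erase : ∑ j ∈ Finset.univ.erase k, π' j = 1 - π' k := by
      have h := Finset.add_sum_erase Finset.univ π' (Finset.mem_univ k)
      rw [hπ_sum] at h
      linarith
    have hnum : |∑ j ∈ Finset.univ.erase k, π' j * Real.exp (-b j ε / 2) * b j ε|
        ≤ a * S + (1 - π' k) := by
      calc |∑ j ∈ Finset.univ.erase k, π' j * Real.exp (-b j ε / 2) * b j ε|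
          ≤ ∑ j ∈ Finset.univ.erase k, |π' j * Real.exp (-b j ε / 2) * b j ε| :=
            Finset.abs_sum_le_sum_abs _ _
        _ ≤ ∑ j ∈ Finset.univ.erase k,
              π' j * (a * Real.exp (-b j ε / 2) + 1) := by
            apply Finset.sum_le_sum
            intro j hj
            rw [abs_mul, abs_mul, abs_of_pos (hπ_pos j), abs_of_pos (Real.exp_pos _),
              mul_assoc]
            exact mul_le_mul_of_nonneg_left (exp_abs_bound ha (hc j hj)) (hπ_pos j).le
        _ = a * S + (1 - π' k) := by
            rw [← hsum_erase, hS_def, Finset.mul_sum, ← Finset.sum_add_distrib]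
            exact Finset.sum_congr rfl fun j _ => by ring
    have hak : a * π' k = t * π' k - 1 := by
      rw [ha_def]
      field_simp
    have hts : t * S - a * S = (1 / π' k) * S := by
      rw [ha_def]; ring
    have hRle : |R ε| ≤ t := by
      rw [hR ε, abs_div, abs_of_pos hden, div_le_iff₀ hden]
      have h1 : 0 < a * π' k := mul_pos ha hπk
      have h2 : 0 ≤ (1 / π' k) * S := mul_nonneg hπk_inv.le hS_nonneg
      linarith
    exact absurd hε (not_lt.mpr hRle)
  have hj_bound : ∀ j, (Measure.pi fun _ : Fin D => gaussianReal 0 1)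
      {ε : Fin D → ℝ | b j ε ≤ -a} ≤ ENNReal.ofReal (Real.exp (-a / 2)) := by
    intro j
    have hsub2 : {ε : Fin D → ℝ | b j ε ≤ -a} ⊆
        {ε : Fin D → ℝ | ENNReal.ofReal (Real.exp (a / 2))
          ≤ ENNReal.ofReal (Real.exp (-b j ε / 2))} := by
      intro ε hε
      simp only [Set.mem_setOf_eq] at hε ⊢
      exact ENNReal.ofReal_le_ofReal (Real.exp_le_exp.mpr (by linarith))
    refine (measure_mono hsub2).trans ?_
    have hint : ∫⁻ ε, ENNReal.ofReal (Real.exp (-b j ε / 2))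
        ∂(Measure.pi fun _ : Fin D => gaussianReal 0 1) = 1 := by
      have hfe : (fun ε : Fin D → ℝ => ENNReal.ofReal (Real.exp (-b j ε / 2)))
          = fun ε : Fin D → ℝ => ENNReal.ofReal
              (Real.exp (-(2 * (∑ i, ε i * Δ j i) + ∑ i, Δ j i ^ 2) / 2)) := by
        funext ε; rw [hb j ε]
      rw [hfe]
      exact lintegral_exp_neg_b (Δ j)
    have hmarkov := meas_ge_le_lintegral_div
      (μ := Measure.pi fun _ : Fin D => gaussianReal 0 1)
      (f := fun ε : Fin D → ℝ => ENNReal.ofReal (Real.exp (-b j ε / 2)))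
      (((hbm j).neg.div_const 2).exp.ennreal_ofReal.aemeasurable)
      (ε := ENNReal.ofReal (Real.exp (a / 2)))
      (by simp [Real.exp_pos]) ENNReal.ofReal_ne_top
    rw [hint] at hmarkov
    refine hmarkov.trans (le_of_eq ?_)
    rw [one_div, ← ENNReal.ofReal_inv_of_pos (Real.exp_pos _), ← Real.exp_neg, neg_div]
  calc (Measure.pi fun _ : Fin D => gaussianReal 0 1) {ε | t < |R ε|}
      ≤ (Measure.pi fun _ : Fin D => gaussianReal 0 1)
          (⋃ j ∈ Finset.univ.erase k, {ε : Fin D → ℝ | b j ε ≤ -a}) := measure_mono hsub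
    _ ≤ ∑ j ∈ Finset.univ.erase k,
          (Measure.pi fun _ : Fin D => gaussianReal 0 1) {ε : Fin D → ℝ | b j ε ≤ -a} :=
        measure_biUnion_finset_le _ _
    _ ≤ ∑ j ∈ Finset.univ.erase k, ENNReal.ofReal (Real.exp (-a / 2)) :=
        Finset.sum_le_sum fun j _ => hj_bound j
    _ ≤ ENNReal.ofReal ((K - 1 : ℝ) * Real.exp (-a / 2)) := by
        rw [Finset.sum_const, Finset.card_erase_of_mem (Finset.mem_univ k),
          Finset.card_univ, Fintype.card_fin, nsmul_eq_mul,
          ← ENNReal.ofReal_natCast (K - 1), ← ENNReal.ofReal_mul (Nat.cast_nonneg _)]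
        apply ENNReal.ofReal_le_ofReal
        rw [Nat.cast_sub (by omega), Nat.cast_one]
end
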